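/- arXiv:1009.0541 — 2 statements merged into one kernel-verified Lean document; each statement's English description precedes it below -/
import Mathlib

section
/- Trigonometric Pöschl-Teller reduction: if f satisfies the hypergeometric equation F((α+β+μ+1)/2, (α+β-μ+1)/2; 1+α; z)f = 0, then φ(r) := (sin r)^{α+1/2}(cos r)^{β+1/2} f(sin² r) satisfies -φ''(r) + [ (α² - 1/4)/sin² r + (β² - 1/4)/cos² r ] φ(r) = μ² φ(r) for r ∈ (0, π/2). -/
/-!
Let `T g = sin^p cos^q · (g ∘ sin²)` with `p = α + 1/2`, `q = β + 1/2`, so that `φ = T f`.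
Derivatives of transforms are again combinations of transforms,
`(T g)' = L · T g + 2 sin cos · T g'`, where `L = p cot - q tan` is the logarithmic derivative of
`sin^p cos^q`. Differentiating twice and using `cos² = 1 - sin²`, the Pöschl–Teller operator
applied to `T f` equals `-4 sin^p cos^q` times the hypergeometric operator applied to `f` at
`sin² r`: the choice of `p` and `q` is exactly what makes the `1/sin²` and `1/cos²` terms of
`L' + L²` match the potential.
-/

open Real Set Topology

noncomputable def poschlTellerTransform (p q : ℝ) (g : ℝ → ℝ) (t : ℝ) : ℝ :=
  sin t ^ p * cos t ^ q * g (sin t ^ 2)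

noncomputable def weightLogDeriv (p q t : ℝ) : ℝ := p * cos t / sin t - q * sin t / cos t

noncomputable def hypergeometricOp (a b c : ℝ) (f : ℝ → ℝ) (z : ℝ) : ℝ :=
  z * (1 - z) * deriv (deriv f) z + (c - (a + b + 1) * z) * deriv f z - a * b * f z

noncomputable def poschlTellerOp (α β μ : ℝ) (φ : ℝ → ℝ) (r : ℝ) : ℝ :=
  -deriv (deriv φ) r + ((α ^ 2 - 1/4) / sin r ^ 2 + (β ^ 2 - 1/4) / cos r ^ 2) * φ r
    - μ ^ 2 * φ r

lemma sin_pos_and_cos_pos_of_mem_Ioo {r : ℝ} (hr : r ∈ Ioo 0 (π / 2)) :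
    0 < sin r ∧ 0 < cos r :=
  ⟨sin_pos_of_mem_Ioo ⟨hr.1, by linarith [hr.2, pi_pos]⟩,
    cos_pos_of_mem_Ioo ⟨by linarith [hr.1, pi_pos], hr.2⟩⟩

lemma sin_sq_mem_Ioo {r : ℝ} (hr : r ∈ Ioo 0 (π / 2)) : sin r ^ 2 ∈ Ioo (0 : ℝ) 1 := by
  obtain ⟨hs, hc⟩ := sin_pos_and_cos_pos_of_mem_Ioo hr
  exact ⟨by positivity, by nlinarith [sin_sq_add_cos_sq r]⟩

lemma hasDerivAt_weightLogDeriv (p q : ℝ) {r : ℝ} (hs : sin r ≠ 0) (hc : cos r ≠ 0) :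
    HasDerivAt (weightLogDeriv p q) (-p / sin r ^ 2 - q / cos r ^ 2) r := by
  refine ((((hasDerivAt_cos r).const_mul p).fun_div (hasDerivAt_sin r) hs).fun_sub
    (((hasDerivAt_sin r).const_mul q).fun_div (hasDerivAt_cos r) hc)).congr_deriv ?_
  field_simp
  linear_combination (-p * cos r ^ 2 - q * sin r ^ 2) * sin_sq_add_cos_sq r

lemma hasDerivAt_poschlTellerTransform (p q : ℝ) {g g' : ℝ → ℝ} {r : ℝ}
    (hs : 0 < sin r) (hc : 0 < cos r) (hg : HasDerivAt g (g' (sin r ^ 2)) (sin r ^ 2)) :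
    HasDerivAt (poschlTellerTransform p q g)
      (weightLogDeriv p q r * poschlTellerTransform p q g r
        + 2 * sin r * cos r * poschlTellerTransform p q g' r) r := by
  have hsp := (hasDerivAt_sin r).rpow_const (p := p) (Or.inl hs.ne')
  have hcq := (hasDerivAt_cos r).rpow_const (p := q) (Or.inl hc.ne')
  have hgs := hg.comp r ((hasDerivAt_sin r).fun_pow 2)
  refine ((hsp.fun_mul hcq).fun_mul hgs).congr_deriv ?_
  simp only [poschlTellerTransform, weightLogDeriv, Function.comp_apply, rpow_sub_one hs.ne',
    rpow_sub_one hc.ne']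
  field_simp
  ring

lemma hasDerivAt_two_sin_mul_cos (r : ℝ) :
    HasDerivAt (fun t => 2 * sin t * cos t) (2 * (cos r ^ 2 - sin r ^ 2)) r := by
  refine (((hasDerivAt_sin r).const_mul 2).fun_mul (hasDerivAt_cos r)).congr_deriv ?_
  ring

lemma deriv_deriv_poschlTellerTransform (p q : ℝ) {f : ℝ → ℝ}
    (hf : DifferentiableOn ℝ f (Ioo 0 1)) (hf' : DifferentiableOn ℝ (deriv f) (Ioo 0 1))
    {r : ℝ} (hr : r ∈ Ioo 0 (π / 2)) :
    deriv (deriv (poschlTellerTransform p q f)) r =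
      (-p / sin r ^ 2 - q / cos r ^ 2 + weightLogDeriv p q r ^ 2)
          * poschlTellerTransform p q f r
        + (4 * sin r * cos r * weightLogDeriv p q r + 2 * (cos r ^ 2 - sin r ^ 2))
          * poschlTellerTransform p q (deriv f) r
        + 4 * sin r ^ 2 * cos r ^ 2 * poschlTellerTransform p q (deriv (deriv f)) r := by
  have hderiv : ∀ t ∈ Ioo 0 (π / 2), ∀ g : ℝ → ℝ, DifferentiableOn ℝ g (Ioo 0 1) →
      HasDerivAt (poschlTellerTransform p q g)
        (weightLogDeriv p q t * poschlTellerTransform p q g t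
          + 2 * sin t * cos t * poschlTellerTransform p q (deriv g) t) t := by
    intro t ht g hg
    obtain ⟨hs, hc⟩ := sin_pos_and_cos_pos_of_mem_Ioo ht
    exact hasDerivAt_poschlTellerTransform p q hs hc
      ((hg.differentiableAt (isOpen_Ioo.mem_nhds (sin_sq_mem_Ioo ht))).hasDerivAt)
  have hfirst : deriv (poschlTellerTransform p q f) =ᶠ[𝓝 r]
      fun t => weightLogDeriv p q t * poschlTellerTransform p q f t
        + 2 * sin t * cos t * poschlTellerTransform p q (deriv f) t :=
    Filter.eventually_of_mem (isOpen_Ioo.mem_nhds hr) fun t ht => (hderiv t ht f hf).deriv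
  obtain ⟨hs, hc⟩ := sin_pos_and_cos_pos_of_mem_Ioo hr
  rw [hfirst.deriv_eq]
  refine (((hasDerivAt_weightLogDeriv p q hs.ne' hc.ne').fun_mul (hderiv r hr f hf)).fun_add
    ((hasDerivAt_two_sin_mul_cos r).fun_mul (hderiv r hr _ hf'))).deriv.trans ?_
  ring

lemma poschlTellerOp_poschlTellerTransform (α β μ : ℝ) {f : ℝ → ℝ}
    (hf : DifferentiableOn ℝ f (Ioo 0 1)) (hf' : DifferentiableOn ℝ (deriv f) (Ioo 0 1))
    {r : ℝ} (hr : r ∈ Ioo 0 (π / 2)) :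
    poschlTellerOp α β μ (poschlTellerTransform (α + 1/2) (β + 1/2) f) r =
      -4 * sin r ^ (α + 1/2) * cos r ^ (β + 1/2)
        * hypergeometricOp ((α + β + μ + 1) / 2) ((α + β - μ + 1) / 2) (1 + α) f
          (sin r ^ 2) := by
  obtain ⟨hs, hc⟩ := sin_pos_and_cos_pos_of_mem_Ioo hr
  rw [poschlTellerOp, deriv_deriv_poschlTellerTransform _ _ hf hf' hr]
  simp only [poschlTellerTransform, weightLogDeriv, hypergeometricOp]
  field_simp
  simp only [show cos r ^ 4 = (cos r ^ 2) ^ 2 by ring, cos_sq']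
  ring

open Real in
/-- Trigonometric Pöschl–Teller reduction: if `f` solves the hypergeometric
equation with `a = (α+β+μ+1)/2`, `b = (α+β-μ+1)/2`, `c = 1+α` on `(0,1)`, then
`φ(r) = (sin r)^{α+1/2} (cos r)^{β+1/2} f(sin² r)` solves
`-φ'' + [(α²-1/4)/sin²r + (β²-1/4)/cos²r] φ = μ² φ` on `(0, π/2)`. -/
theorem poschl_teller_trigonometric
    (α β μ : ℝ) (f : ℝ → ℝ)
    (hf : ContDiffOn ℝ 2 f (Set.Ioo 0 1))
    (hfeq : ∀ z ∈ Set.Ioo (0:ℝ) 1,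
      z * (1 - z) * deriv (deriv f) z
        + ((1 + α) - ((α + β + μ + 1) / 2 + (α + β - μ + 1) / 2 + 1) * z)
            * deriv f z
        - ((α + β + μ + 1) / 2) * ((α + β - μ + 1) / 2) * f z = 0)
    (φ : ℝ → ℝ)
    (hφ : φ = fun t =>
      Real.sin t ^ (α + 1/2) * Real.cos t ^ (β + 1/2) * f (Real.sin t ^ 2)) :
    ∀ r ∈ Set.Ioo (0:ℝ) (π / 2),
      -deriv (deriv φ) r
          + ((α ^ 2 - 1/4) / Real.sin r ^ 2
              + (β ^ 2 - 1/4) / Real.cos r ^ 2) * φ r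
        = μ ^ 2 * φ r := by
  intro r hr
  subst hφ
  have hH : hypergeometricOp ((α + β + μ + 1) / 2) ((α + β - μ + 1) / 2) (1 + α) f
      (sin r ^ 2) = 0 :=
    hfeq _ (sin_sq_mem_Ioo hr)
  have hf' := (hf.deriv_of_isOpen isOpen_Ioo (m := 1) (by norm_num)).differentiableOn one_ne_zero
  have key := poschlTellerOp_poschlTellerTransform α β μ
    (hf.differentiableOn two_ne_zero) hf' hr
  rw [hH, mul_zero] at key
  exact sub_eq_zero.mp key
end

section
/- Rosen/Scarf/Woods-Saxon reduction: if f satisfies the hypergeometric equation with parameters a = (α+β+μ+1)/2, b = (α+β-μ+1)/2, c = 1+α on (0,1), then φ(r) := z(r)^{α/2} (1 - z(r))^{β/2} f(z(r)) with z(r) = 1/(1 + e^{2r}) satisfies -φ''(r) + α² φ(r) + (β²-α²) φ(r)/(1+e^{2r}) - (μ²-1) e^{2r} φ(r)/(1+e^{2r})² = 0 for all r ∈ ℝ. -/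
/-- Rosen/Scarf/Woods–Saxon reduction: if `f` solves the hypergeometric
equation with `a = (α+β+μ+1)/2`, `b = (α+β-μ+1)/2`, `c = 1+α` on `(0,1)`, then
`φ(r) = z(r)^{α/2} (1-z(r))^{β/2} f(z(r))` with `z(r) = 1/(1+e^{2r})` solves
`-φ'' + α²φ + (β²-α²)φ/(1+e^{2r}) - (μ²-1)e^{2r}φ/(1+e^{2r})² = 0` on `ℝ`. -/
theorem rosen_scarf_woods_saxon
    (α β μ : ℝ) (f : ℝ → ℝ)
    (hf : ContDiffOn ℝ 2 f (Set.Ioo 0 1))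
    (hfeq : ∀ z ∈ Set.Ioo (0:ℝ) 1,
      z * (1 - z) * deriv (deriv f) z
        + ((1 + α) - ((α + β + μ + 1) / 2 + (α + β - μ + 1) / 2 + 1) * z)
            * deriv f z
        - ((α + β + μ + 1) / 2) * ((α + β - μ + 1) / 2) * f z = 0)
    (z : ℝ → ℝ) (hz : z = fun t => 1 / (1 + Real.exp (2 * t)))
    (φ : ℝ → ℝ)
    (hφ : φ = fun t => z t ^ (α / 2) * (1 - z t) ^ (β / 2) * f (z t)) :
    ∀ r : ℝ,
      -deriv (deriv φ) r + α ^ 2 * φ r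
          + (β ^ 2 - α ^ 2) * φ r / (1 + Real.exp (2 * r))
          - (μ ^ 2 - 1) * Real.exp (2 * r) * φ r / (1 + Real.exp (2 * r)) ^ 2
        = 0 := by
  have hmem : ∀ t : ℝ, z t ∈ Set.Ioo (0:ℝ) 1 := by
    intro t
    rw [hz]
    have h1 : (0:ℝ) < 1 + Real.exp (2*t) := by positivity
    constructor
    · positivity
    · rw [div_lt_one h1]; linarith [Real.exp_pos (2*t)]
  have hzd : ∀ t : ℝ, HasDerivAt z (2 * z t * (z t - 1)) t := by
    intro t
    have h1 : (0:ℝ) < 1 + Real.exp (2*t) := by positivity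
    have h2 : HasDerivAt (fun s : ℝ => 1 + Real.exp (2*s)) (Real.exp (2*t) * 2) t := by
      have h3 := (Real.hasDerivAt_exp (2*t)).comp t ((hasDerivAt_id t).const_mul 2)
      simpa [mul_comm] using h3.const_add 1
    have h3 : HasDerivAt (fun s : ℝ => 1 / (1 + Real.exp (2*s)))
        ((0 * (1 + Real.exp (2 * t)) - 1 * (Real.exp (2 * t) * 2)) / (1 + Real.exp (2 * t)) ^ 2) t :=
      (hasDerivAt_const t (1:ℝ)).div h2 h1.ne'
    have h4 : z = fun s : ℝ => 1 / (1 + Real.exp (2*s)) := hz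
    rw [h4]
    convert h3 using 1
    show 2 * (1 / (1 + Real.exp (2*t))) * (1 / (1 + Real.exp (2*t)) - 1)
        = (0 * (1 + Real.exp (2 * t)) - 1 * (Real.exp (2 * t) * 2)) / (1 + Real.exp (2 * t)) ^ 2
    field_simp
    ring
  have hopen : IsOpen (Set.Ioo (0:ℝ) 1) := isOpen_Ioo
  have hfd : ∀ v ∈ Set.Ioo (0:ℝ) 1, HasDerivAt f (deriv f v) v := fun v hv =>
    ((hf.differentiableOn (by norm_num)).differentiableAt (hopen.mem_nhds hv)).hasDerivAt
  have hf1 : ContDiffOn ℝ 1 (deriv f) (Set.Ioo (0:ℝ) 1) :=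
    hf.deriv_of_isOpen hopen (by norm_num)
  have hfd1 : ∀ v ∈ Set.Ioo (0:ℝ) 1, HasDerivAt (deriv f) (deriv (deriv f) v) v := fun v hv =>
    ((hf1.differentiableOn (by norm_num)).differentiableAt (hopen.mem_nhds hv)).hasDerivAt
  have key : ∀ t : ℝ, HasDerivAt φ
      (z t ^ (α/2) * (1 - z t) ^ (β/2) *
        ((α * (z t - 1) + β * z t) * f (z t) + 2 * z t * (z t - 1) * deriv f (z t))) t := by
    intro t
    obtain ⟨hu0, hu1⟩ := hmem t
    have hne1 : (1:ℝ) - z t ≠ 0 := by linarith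
    have hA : HasDerivAt (fun s => z s ^ (α/2))
        (2 * z t * (z t - 1) * (α/2) * z t ^ (α/2 - 1)) t :=
      (hzd t).rpow_const (Or.inl hu0.ne')
    have hB : HasDerivAt (fun s => (1 - z s) ^ (β/2))
        ((-(2 * z t * (z t - 1))) * (β/2) * (1 - z t) ^ (β/2 - 1)) t := by
      have h1 : HasDerivAt (fun s => 1 - z s) (-(2 * z t * (z t - 1))) t := (hzd t).const_sub 1
      exact h1.rpow_const (Or.inl hne1)
    have hC : HasDerivAt (fun s => f (z s)) (deriv f (z t) * (2 * z t * (z t - 1))) t := by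
      exact (hfd (z t) (hmem t)).comp t (hzd t)
    have hAll := (hA.mul hB).mul hC
    rw [hφ]
    refine hAll.congr_deriv ?_
    simp only [Pi.mul_apply]
    have e1 : z t ^ (α/2 - 1) = z t ^ (α/2) / z t := by
      rw [Real.rpow_sub hu0, Real.rpow_one]
    have e2 : (1 - z t) ^ (β/2 - 1) = (1 - z t) ^ (β/2) / (1 - z t) := by
      rw [Real.rpow_sub (by linarith), Real.rpow_one]
    rw [e1, e2]
    field_simp
    ring
  have hderiv : deriv φ = fun t => z t ^ (α/2) * (1 - z t) ^ (β/2) *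
      ((α * (z t - 1) + β * z t) * f (z t) + 2 * z t * (z t - 1) * deriv f (z t)) :=
    funext fun t => (key t).deriv
  intro r
  obtain ⟨hu0, hu1⟩ := hmem r
  have hne1 : (1:ℝ) - z r ≠ 0 := by linarith
  -- second derivative
  have hh : HasDerivAt (fun v => (α * (v - 1) + β * v) * f v + 2 * v * (v - 1) * deriv f v)
      ((α + β) * f (z r) + (α * (z r - 1) + β * z r + 4 * z r - 2) * deriv f (z r)
        + 2 * z r * (z r - 1) * deriv (deriv f) (z r)) (z r) := by
    have h1 : HasDerivAt (fun v : ℝ => α * (v - 1) + β * v) (α * 1 + β * 1) (z r) :=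
      (((hasDerivAt_id (z r)).sub_const 1).const_mul α).add ((hasDerivAt_id (z r)).const_mul β)
    have h2 : HasDerivAt (fun v : ℝ => 2 * v * (v - 1)) (2 * 1 * (z r - 1) + 2 * z r * 1) (z r) :=
      ((hasDerivAt_id (z r)).const_mul 2).mul ((hasDerivAt_id (z r)).sub_const 1)
    have h3 := (h1.mul (hfd (z r) (hmem r))).add (h2.mul (hfd1 (z r) (hmem r)))
    refine h3.congr_deriv ?_
    ring
  have hsecond : deriv (deriv φ) r = z r ^ (α/2) * (1 - z r) ^ (β/2) *
      ((α * (z r - 1) + β * z r) *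
          ((α * (z r - 1) + β * z r) * f (z r) + 2 * z r * (z r - 1) * deriv f (z r))
        + 2 * z r * (z r - 1) *
          ((α + β) * f (z r) + (α * (z r - 1) + β * z r + 4 * z r - 2) * deriv f (z r)
            + 2 * z r * (z r - 1) * deriv (deriv f) (z r))) := by
    rw [hderiv]
    have hA : HasDerivAt (fun s => z s ^ (α/2))
        (2 * z r * (z r - 1) * (α/2) * z r ^ (α/2 - 1)) r :=
      (hzd r).rpow_const (Or.inl hu0.ne')
    have hB : HasDerivAt (fun s => (1 - z s) ^ (β/2))
        ((-(2 * z r * (z r - 1))) * (β/2) * (1 - z r) ^ (β/2 - 1)) r := by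
      have h1 : HasDerivAt (fun s => 1 - z s) (-(2 * z r * (z r - 1))) r := (hzd r).const_sub 1
      exact h1.rpow_const (Or.inl hne1)
    have hC : HasDerivAt (fun s => (α * (z s - 1) + β * z s) * f (z s)
          + 2 * z s * (z s - 1) * deriv f (z s))
        (((α + β) * f (z r) + (α * (z r - 1) + β * z r + 4 * z r - 2) * deriv f (z r)
          + 2 * z r * (z r - 1) * deriv (deriv f) (z r)) * (2 * z r * (z r - 1))) r := by
      exact hh.comp r (hzd r)
    have hAll := (hA.mul hB).mul hC
    refine HasDerivAt.deriv (hAll.congr_deriv ?_)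
    simp only [Pi.mul_apply]
    have e1 : z r ^ (α/2 - 1) = z r ^ (α/2) / z r := by
      rw [Real.rpow_sub hu0, Real.rpow_one]
    have e2 : (1 - z r) ^ (β/2 - 1) = (1 - z r) ^ (β/2) / (1 - z r) := by
      rw [Real.rpow_sub (by linarith), Real.rpow_one]
    rw [e1, e2]
    field_simp
    ring
  have hexp : (0:ℝ) < 1 + Real.exp (2*r) := by positivity
  have e1 : (β ^ 2 - α ^ 2) * φ r / (1 + Real.exp (2 * r)) = (β ^ 2 - α ^ 2) * φ r * z r := by
    rw [hz]; field_simp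
  have e2 : (μ ^ 2 - 1) * Real.exp (2 * r) * φ r / (1 + Real.exp (2 * r)) ^ 2
      = (μ ^ 2 - 1) * (z r * (1 - z r)) * φ r := by
    rw [hz]
    field_simp
    ring
  rw [e1, e2, hsecond]
  have hφr : φ r = z r ^ (α/2) * (1 - z r) ^ (β/2) * f (z r) := by rw [hφ]
  rw [hφr]
  have hyp := hfeq (z r) (hmem r)
  linear_combination (4 * z r * (z r - 1) * (z r ^ (α/2) * (1 - z r) ^ (β/2))) * hyp
end
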